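/- Let ℓ ∈ ℕ and m ∈ ℤ with |m| ≤ ℓ, and set h_{a,b} := √((a+b)(a−b)) for integers a,b with (a+b)(a−b) ≥ 0. Then for all y ∈ (−1,1) and φ ∈ ℝ: y·Y_{ℓ,m}(y,φ) = (1/(2ℓ+1))·(h_{ℓ+1,m}·Y_{ℓ+1,m}(y,φ) + h_{ℓ,m}·Y_{ℓ−1,m}(y,φ)), where Y_{ℓ−1,m} := 0 when |m| > ℓ−1 (note h_{ℓ,m} = 0 when |m| = ℓ). -/

import Mathlib

/-!
Write `u_n = (X² - 1)ⁿ` and `D` for the derivative. From `D u_{n+1} = 2(n+1) X u_n` and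
`X² u_n = u_{n+1} + u_n`, differentiating `k` times expresses both `X D^{k+1} u_{n+1}` and
`D^{k+2} u_{n+2}` through `D^k u_{n+1}` and `D^k u_n`; eliminating `D^k u_{n+1}` gives a
three-term relation which, for `k = ℓ + m - 1` and after Rodrigues' normalization, is the classical
`(2ℓ+1) y P̂_ℓ^m = (ℓ-m+1) P̂_{ℓ+1}^m + (ℓ+m) P̂_{ℓ-1}^m`. The factors `√((ℓ∓m)!/(ℓ±m)!)` turn
`ℓ-m+1` and `ℓ+m` into `h_{ℓ+1,m}` and `h_{ℓ,m}`, and the angular part of `Y_{ℓ,m}` depends only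
on `m`.
-/

open Polynomial

/-- Associated Legendre function
`P̂_ℓ^m(y) = (−1)^m·(1−y²)^{m/2}·(1/(2^ℓ·ℓ!))·(d/dy)^{ℓ+m}[(y²−1)^ℓ]`. -/
noncomputable def hatP (l m : ℕ) (y : ℝ) : ℝ :=
  (-1 : ℝ) ^ m * (1 - y ^ 2) ^ ((m : ℝ) / 2) * (1 / ((2 : ℝ) ^ l * (Nat.factorial l : ℝ))) *
    Polynomial.eval y
      ((fun q : Polynomial ℝ => Polynomial.derivative q)^[l + m] ((X ^ 2 - 1) ^ l))

/-- Normalized associated Legendre function `Č_ℓ^m = √((ℓ−m)!/(ℓ+m)!)·P̂_ℓ^m`. -/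
noncomputable def checkP (l m : ℕ) (y : ℝ) : ℝ :=
  Real.sqrt ((Nat.factorial (l - m) : ℝ) / (Nat.factorial (l + m) : ℝ)) * hatP l m y

/-- Real (tesseral) spherical harmonics `Y_{ℓ,m}(y,φ)`, defined to be `0` when
`ℓ < 0` or `|m| > ℓ`. -/
noncomputable def Ysh (l m : ℤ) (y φ : ℝ) : ℝ :=
  if 0 ≤ l ∧ |m| ≤ l then
    if m < 0 then Real.sqrt 2 * checkP l.toNat m.natAbs y * Real.sin ((m.natAbs : ℝ) * φ)
    else if m = 0 then checkP l.toNat 0 y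
    else Real.sqrt 2 * checkP l.toNat m.natAbs y * Real.cos ((m : ℝ) * φ)
  else 0

/-- `h_{a,b} = √((a+b)(a−b))`. -/
noncomputable def hC (a b : ℤ) : ℝ := Real.sqrt (((a + b) * (a - b) : ℤ) : ℝ)


namespace Polynomial

variable {R : Type*} [CommRing R]

noncomputable def rodrigues (n : ℕ) : R[X] := (X ^ 2 - 1) ^ n

theorem derivative_rodrigues_succ (n : ℕ) :
    derivative (rodrigues (n + 1) : R[X]) = (2 * (n + 1) : R[X]) * X * rodrigues n := by
  simp only [rodrigues, derivative_pow, derivative_sub, derivative_one,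
    derivative_X, sub_zero, mul_one, map_natCast]
  push_cast
  ring

theorem X_sq_mul_rodrigues (n : ℕ) :
    X ^ 2 * (rodrigues n : R[X]) = rodrigues (n + 1) + rodrigues n := by
  simp only [rodrigues]
  ring

theorem X_mul_iterate_derivative_rodrigues (n k : ℕ) :
    X * derivative^[k + 1] (rodrigues (n + 1) : R[X]) =
      (2 * (n + 1) - k : R[X]) * derivative^[k] (rodrigues (n + 1))
        + (2 * (n + 1) : R[X]) * derivative^[k] (rodrigues n) := by
  have h : derivative (rodrigues (n + 1) : R[X]) * X =
      ((2 * (n + 1) : ℕ) : R[X]) * (rodrigues (n + 1) + rodrigues n) := by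
    rw [derivative_rodrigues_succ, ← X_sq_mul_rodrigues]
    push_cast
    ring
  have hk := congrArg (derivative^[k]) h
  rw [iterate_derivative_derivative_mul_X, iterate_derivative_natCast_mul,
    iterate_map_add, nsmul_eq_mul] at hk
  push_cast at hk
  linear_combination hk

theorem iterate_derivative_rodrigues_add_two (n k : ℕ) :
    derivative^[k + 2] (rodrigues (n + 2) : R[X]) =
      (2 * (n + 2) * (2 * n + 3) : R[X]) * derivative^[k] (rodrigues (n + 1))
        + (4 * (n + 1) * (n + 2) : R[X]) * derivative^[k] (rodrigues n) := by
  have h : derivative^[2] (rodrigues (n + 2) : R[X]) =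
      ((2 * (n + 2) * (2 * n + 3) : ℕ) : R[X]) * rodrigues (n + 1)
        + ((4 * (n + 1) * (n + 2) : ℕ) : R[X]) * rodrigues n := by
    simp only [Function.iterate_succ_apply, Function.iterate_zero_apply, derivative_rodrigues_succ,
      derivative_mul, derivative_X, derivative_ofNat, derivative_add, derivative_natCast,
      derivative_one]
    push_cast
    linear_combination (4 * (n + 1) * (n + 2) : R[X]) * X_sq_mul_rodrigues (R := R) n
  rw [Function.iterate_add_apply, h, iterate_map_add, iterate_derivative_natCast_mul,
    iterate_derivative_natCast_mul]
  push_cast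
  ring

theorem rodrigues_three_term (n k : ℕ) :
    (2 * (n + 2) * (2 * n + 3) : R[X]) * X * derivative^[k + 1] (rodrigues (n + 1)) =
      (2 * (n + 1) - k : R[X]) * derivative^[k + 2] (rodrigues (n + 2))
        + (4 * (n + 1) * (n + 2) * (k + 1) : R[X]) * derivative^[k] (rodrigues n) := by
  rw [iterate_derivative_rodrigues_add_two]
  linear_combination (2 * (n + 2) * (2 * n + 3) : R[X]) * X_mul_iterate_derivative_rodrigues (R := R) n k

theorem natDegree_rodrigues_le (n : ℕ) : (rodrigues n : R[X]).natDegree ≤ 2 * n := by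
  rw [rodrigues, mul_comm]
  exact natDegree_pow_le_of_le n (by compute_degree)

end Polynomial

section

open Nat

theorem hatP_eq (l m : ℕ) (y : ℝ) :
    hatP l m y = (-1) ^ m * (1 - y ^ 2) ^ ((m : ℝ) / 2) / (2 ^ l * l !) *
      eval y (derivative^[l + m] (rodrigues l)) := by
  rw [hatP, rodrigues, mul_one_div]

theorem hatP_eq_zero_of_lt {l m : ℕ} (h : l < m) (y : ℝ) : hatP l m y = 0 := by
  rw [hatP_eq, iterate_derivative_eq_zero ((natDegree_rodrigues_le l).trans_lt (by omega)),
    eval_zero, mul_zero]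

theorem hatP_recurrence (n m : ℕ) (y : ℝ) :
    (2 * n + 3) * y * hatP (n + 1) m y =
      (n + 2 - m) * hatP (n + 2) m y + (n + 1 + m) * hatP n m y := by
  have key := congrArg (eval y) (rodrigues_three_term (R := ℝ) n (n + m))
  simp only [eval_mul, eval_add, eval_sub, eval_X, eval_natCast, eval_ofNat, eval_one] at key
  push_cast at key
  have e1 : (2 : ℝ) ^ (n + 1) * (n + 1)! = 2 * (n + 1) * (2 ^ n * n !) := by
    push_cast [factorial_succ]; ring
  have e2 : (2 : ℝ) ^ (n + 2) * (n + 2)! = 4 * (n + 1) * (n + 2) * (2 ^ n * n !) := by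
    push_cast [factorial_succ]; ring
  rw [hatP_eq, hatP_eq, hatP_eq, e1, e2, show n + 1 + m = n + m + 1 by ring,
    show n + 2 + m = n + m + 2 by ring]
  generalize (-1 : ℝ) ^ m * (1 - y ^ 2) ^ ((m : ℝ) / 2) = w
  have hc : (2 : ℝ) ^ n * n ! ≠ 0 := by positivity
  field_simp
  linear_combination 2 * w * key

noncomputable def legendreNormalization (l m : ℕ) : ℝ := √(((l - m)! : ℝ) / (l + m)!)

theorem checkP_eq (l m : ℕ) (y : ℝ) :
    checkP l m y = legendreNormalization l m * hatP l m y := rfl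

theorem factorial_ratio_succ {l m : ℕ} (hm : m ≤ l) :
    ((l + 1 - m)! : ℝ) / (l + 1 + m)! = ((l : ℝ) + 1 - m) * ((l - m)! / (l + m)!) / (l + 1 + m) := by
  rw [show l + 1 - m = l - m + 1 by omega, show l + 1 + m = l + m + 1 by omega]
  push_cast [factorial_succ, Nat.cast_sub hm]
  field_simp
  ring

theorem Real.sqrt_mul_mul_sqrt_mul_div {a b x : ℝ} (ha : 0 < a) (hb : 0 ≤ b) :
    √(a * b) * √(b * x / a) = b * √x := by
  rw [← Real.sqrt_mul (by positivity), show a * b * (b * x / a) = b ^ 2 * x by field_simp,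
    Real.sqrt_mul (by positivity), Real.sqrt_sq hb]

theorem Real.sqrt_mul_mul_sqrt {a b x : ℝ} (ha : 0 < a) (hb : 0 ≤ b) :
    √(a * b) * √x = a * √(b * x / a) := by
  rw [← Real.sqrt_mul (by positivity), show a * b * x = a ^ 2 * (b * x / a) by field_simp,
    Real.sqrt_mul (by positivity), Real.sqrt_sq ha.le]

theorem hC_natCast_add_one (l m : ℕ) :
    hC ((l : ℤ) + 1) m = √(((l : ℝ) + 1 + m) * ((l : ℝ) + 1 - m)) := by
  rw [hC]
  push_cast
  ring_nf

theorem hC_mul_legendreNormalization_succ {l m : ℕ} (hm : m ≤ l) :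
    hC ((l : ℤ) + 1) m * legendreNormalization (l + 1) m =
      ((l : ℝ) + 1 - m) * legendreNormalization l m := by
  rw [hC_natCast_add_one, legendreNormalization, legendreNormalization, factorial_ratio_succ hm]
  exact Real.sqrt_mul_mul_sqrt_mul_div (by positivity) (by rify at hm; linarith)

theorem hC_mul_legendreNormalization {l m : ℕ} (hm : m ≤ l) :
    hC ((l : ℤ) + 1) m * legendreNormalization l m =
      ((l : ℝ) + 1 + m) * legendreNormalization (l + 1) m := by
  rw [hC_natCast_add_one, legendreNormalization, legendreNormalization, factorial_ratio_succ hm]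
  exact Real.sqrt_mul_mul_sqrt (by positivity) (by rify at hm; linarith)

theorem checkP_recurrence {l m : ℕ} (hl : 0 < l) (hm : m ≤ l) (y : ℝ) :
    (2 * l + 1) * y * checkP l m y =
      hC ((l : ℤ) + 1) m * checkP (l + 1) m y + hC l m * checkP (l - 1) m y := by
  obtain ⟨n, rfl⟩ : ∃ n, l = n + 1 := ⟨l - 1, by omega⟩
  have hsucc := hC_mul_legendreNormalization_succ hm
  have hlow : ((n : ℝ) + 1 + m) * legendreNormalization (n + 1) m * hatP n m y =
      hC ((n : ℤ) + 1) m * legendreNormalization n m * hatP n m y := by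
    rcases hm.lt_or_eq with hlt | rfl
    · rw [hC_mul_legendreNormalization (Nat.lt_succ_iff.mp hlt)]
    · rw [hatP_eq_zero_of_lt (Nat.lt_succ_self n), mul_zero, mul_zero]
  simp only [checkP_eq, Nat.add_sub_cancel]
  push_cast at hsucc ⊢
  linear_combination legendreNormalization (n + 1) m * hatP_recurrence n m y
    - hatP (n + 2) m y * hsucc + hlow

end

theorem checkP_zero_zero (y : ℝ) : checkP 0 0 y = 1 := by
  norm_num [checkP, hatP]

theorem checkP_one_zero (y : ℝ) : checkP 1 0 y = y := by
  norm_num [checkP, hatP]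
  ring

noncomputable def angularFactor (m : ℤ) (φ : ℝ) : ℝ :=
  if m < 0 then √2 * Real.sin (m.natAbs * φ) else if m = 0 then 1 else √2 * Real.cos (m * φ)

theorem Ysh_natCast (l : ℕ) (m : ℤ) (y φ : ℝ) :
    Ysh l m y φ = angularFactor m φ * checkP l m.natAbs y := by
  rw [Ysh, angularFactor, Int.toNat_natCast]
  by_cases hm : |m| ≤ l
  · rw [if_pos ⟨by positivity, hm⟩]
    split_ifs with hneg hzero
    · ring
    · simp [hzero]
    · ring
  · have hlt : l < m.natAbs := by rw [Int.abs_eq_natAbs] at hm; omega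
    rw [if_neg (fun h => hm h.2), checkP_eq, hatP_eq_zero_of_lt hlt, mul_zero, mul_zero]

theorem hC_natAbs (a m : ℤ) : hC a m = hC a m.natAbs := by
  rw [hC, hC]
  congr 2
  linear_combination Int.natAbs_sq m

theorem stmt16 (l : ℕ) (m : ℤ) (hm : |m| ≤ (l : ℤ)) :
    ∀ y ∈ Set.Ioo (-1 : ℝ) 1, ∀ φ : ℝ,
      y * Ysh l m y φ
        = (1 / (2 * (l : ℝ) + 1)) *
            (hC ((l : ℤ) + 1) m * Ysh ((l : ℤ) + 1) m y φ
              + hC l m * Ysh ((l : ℤ) - 1) m y φ) := by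
  intro y _ φ
  have hM : m.natAbs ≤ l := by rw [Int.abs_eq_natAbs] at hm; omega
  have hYsucc : Ysh ((l : ℤ) + 1) m y φ = angularFactor m φ * checkP (l + 1) m.natAbs y := by
    exact_mod_cast Ysh_natCast (l + 1) m y φ
  rw [one_div, inv_mul_eq_div, eq_div_iff (by positivity), hC_natAbs _ m, hC_natAbs l m,
    Ysh_natCast, hYsucc]
  rcases Nat.eq_zero_or_pos l with rfl | hl
  · obtain rfl : m = 0 := by omega
    simp [Ysh, hC, checkP_zero_zero, checkP_one_zero, mul_comm]
  · rw [show (l : ℤ) - 1 = (l - 1 : ℕ) by omega, Ysh_natCast]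
    linear_combination angularFactor m φ * checkP_recurrence hl hM y
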